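/- Let Q_N be the N×N symmetric circulant matrix with diagonal entries J and entries −1 at positions (i, i±1 mod N) (for N ≥ 3), all other entries 0. Then det Q_N = 2 T_N(J/2) − 2, where T_N is the N-th Chebyshev polynomial of the first kind. -/

import Mathlib

/-!
Let `S` be the cyclic shift matrix, `S i j = 1` iff `j = i + 1`. For `N ≥ 3` the matrix is
`J • 1 - S - Sᵀ` with `S Sᵀ = 1`, so for complex `r, s` with `r + s = J` and `r s = 1` it factors as
`(r • 1 - S) (1 - s • Sᵀ)`. Expanding along the first column gives `det (a • 1 - b • S) = a ^ N - b ^ N`,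
hence the determinant is `(r ^ N - 1) (1 - s ^ N) = r ^ N + s ^ N - 2`, and `r ^ N + s ^ N = 2 T_N (J / 2)`
because both sides satisfy the Chebyshev recurrence.
-/

/-- Chebyshev polynomials of the first kind as real functions:
`T 0 = 1`, `T 1 x = x`, `T (n+1) x = 2x * T n x - T (n-1) x`. -/
def chebT : ℕ → ℝ → ℝ
  | 0, _ => 1
  | 1, x => x
  | n + 2, x => 2 * x * chebT (n + 1) x - chebT n x

/-- The `N × N` symmetric circulant matrix with diagonal entries `J` and entries `-1`
at cyclically adjacent positions `(i, i ± 1 mod N)`. -/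
def circMat (N : ℕ) [NeZero N] (J : ℝ) : Matrix (Fin N) (Fin N) ℝ :=
  fun i j => if i = j then J else if j = i + 1 ∨ i = j + 1 then -1 else 0

open Matrix

theorem algebraMap_two_mul_chebT {A : Type*} [CommRing A] [Algebra ℝ A] {r s : A} {x : ℝ}
    (hrs : r * s = 1) (hsum : r + s = algebraMap ℝ A (2 * x)) (n : ℕ) :
    algebraMap ℝ A (2 * chebT n x) = r ^ n + s ^ n := by
  induction n using Nat.twoStepInduction with
  | zero => simp [chebT, map_ofNat]; norm_num
  | one => simp [chebT, hsum]
  | more n ih₀ ih₁ =>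
    calc algebraMap ℝ A (2 * chebT (n + 2) x)
        = algebraMap ℝ A (2 * x) * algebraMap ℝ A (2 * chebT (n + 1) x)
          - algebraMap ℝ A (2 * chebT n x) := by simp only [chebT, map_sub, map_mul]; ring
      _ = r ^ (n + 2) + s ^ (n + 2) := by
          rw [ih₀, ih₁, ← hsum]; linear_combination (r ^ n + s ^ n) * hrs

theorem Fin.add_one_eq_zero_iff_eq_last {n : ℕ} (i : Fin (n + 1)) :
    i + 1 = 0 ↔ i = Fin.last n := by
  refine ⟨fun h => ?_, fun h => h ▸ Fin.last_add_one n⟩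
  by_contra hne
  rw [Fin.ext_iff, Fin.val_add_one, if_neg hne] at h
  simp at h

namespace Matrix

def cyclicShift (R : Type*) [Zero R] [One R] (N : ℕ) [NeZero N] : Matrix (Fin N) (Fin N) R :=
  of fun i j => if j = i + 1 then 1 else 0

variable {R : Type*} {N : ℕ} [NeZero N]

theorem cyclicShift_mul_transpose [Semiring R] :
    cyclicShift R N * (cyclicShift R N)ᵀ = 1 := by
  ext i j
  simp [cyclicShift, mul_apply, one_apply, eq_comm]

theorem cyclicShift_map [Zero R] [One R] {S : Type*} [Zero S] [One S] {f : R → S}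
    (h₀ : f 0 = 0) (h₁ : f 1 = 1) : (cyclicShift R N).map f = cyclicShift S N := by
  ext i j
  simp [cyclicShift, apply_ite f, h₀, h₁]

variable [CommRing R]

theorem smul_one_sub_mul_one_sub_smul {A : Type*} [Ring A] [Algebra R A] {r s : R} {S T : A}
    (hrs : r * s = 1) (hST : S * T = 1) :
    (r • 1 - S) * (1 - s • T) = (r + s) • 1 - S - T := by
  have hrsT : (r • (1 : A)) * (s • T) = T := by rw [smul_mul_smul_comm, hrs, one_mul, one_smul]
  rw [sub_mul, mul_sub, mul_sub, hrsT, mul_one, mul_one, mul_smul_comm, hST, add_smul]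
  abel

theorem smul_one_sub_smul_cyclicShift_apply (a b : R) (i j : Fin N) :
    (a • 1 - b • cyclicShift R N) i j = (if i = j then a else 0) - if j = i + 1 then b else 0 := by
  simp [cyclicShift, one_apply]

theorem det_smul_one_sub_smul_cyclicShift_submatrix_succ_succ (n : ℕ) (a b : R) :
    ((a • 1 - b • cyclicShift R (n + 2)).submatrix Fin.succ Fin.succ).det = a ^ (n + 1) := by
  rw [det_of_isUpperTriangular]
  · simp only [submatrix_apply, smul_one_sub_smul_cyclicShift_apply]
    simp
  · intro s t hts
    have hts' : (t : ℕ) < s := hts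
    rw [submatrix_apply, smul_one_sub_smul_cyclicShift_apply, if_neg, if_neg, sub_zero]
    · rw [Fin.ext_iff, Fin.val_add_one]
      split_ifs <;> simp; omega
    · simpa using hts.ne'

theorem det_smul_one_sub_smul_cyclicShift_submatrix_castSucc_succ (n : ℕ) (a b : R) :
    ((a • 1 - b • cyclicShift R (n + 2)).submatrix Fin.castSucc Fin.succ).det = (-b) ^ (n + 1) := by
  rw [det_of_isLowerTriangular]
  · simp only [submatrix_apply, smul_one_sub_smul_cyclicShift_apply, Fin.coeSucc_eq_succ]
    simp [Fin.castSucc_lt_succ.ne]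
  · intro s t hst
    rw [submatrix_apply, smul_one_sub_smul_cyclicShift_apply, if_neg, if_neg, sub_zero]
    · rw [Fin.coeSucc_eq_succ]; simpa using hst.ne
    · have : (s : ℕ) < t := hst
      rw [Fin.ext_iff]; simp; omega

theorem det_smul_one_sub_smul_cyclicShift (a b : R) :
    (a • 1 - b • cyclicShift R N).det = a ^ N - b ^ N := by
  obtain _ | _ | n := N
  · exact absurd rfl (NeZero.ne 0)
  · rw [det_fin_one, smul_one_sub_smul_cyclicShift_apply]
    simp
  -- only the rows `0` and `last` have a nonzero entry in column `0`
  rw [det_succ_column_zero, Fintype.sum_eq_add 0 (Fin.last _) (Fin.last_pos).ne]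
  · rw [Fin.succAbove_zero, Fin.succAbove_last,
      det_smul_one_sub_smul_cyclicShift_submatrix_succ_succ,
      det_smul_one_sub_smul_cyclicShift_submatrix_castSucc_succ]
    simp only [smul_one_sub_smul_cyclicShift_apply, Fin.last_add_one]
    have hsign : (-1 : R) ^ (n + 1) * (-b) ^ (n + 1) = b ^ (n + 1) := by
      rw [← mul_pow, neg_one_mul, neg_neg]
    simp
    linear_combination (-b) * hsign
  · rintro i ⟨hi0, hil⟩
    simp only [smul_one_sub_smul_cyclicShift_apply]
    simp [eq_comm (a := (0 : Fin _)), Fin.add_one_eq_zero_iff_eq_last, hi0, hil]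

end Matrix

theorem circMat_eq (N : ℕ) [NeZero N] (hN : 3 ≤ N) (J : ℝ) :
    circMat N J = J • 1 - cyclicShift ℝ N - (cyclicShift ℝ N)ᵀ := by
  obtain ⟨m, rfl⟩ : ∃ m, N = m + 3 := ⟨N - 3, by omega⟩
  have h₁ (i : Fin (m + 3)) : i ≠ i + 1 := left_ne_add.mpr one_ne_zero
  have h₂ (i : Fin (m + 3)) : i ≠ i + 1 + 1 := by
    rw [add_assoc, Ne, left_eq_add, Fin.ext_iff]
    simp [Fin.val_add, Nat.mod_eq_of_lt (show 2 < m + 3 by omega)]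
  ext i j
  by_cases hij : i = j
  · subst hij
    simp [circMat, cyclicShift, h₁]
  by_cases hj : j = i + 1
  · simp [circMat, cyclicShift, hj, h₂ i]
  · by_cases hi : i = j + 1 <;> simp [circMat, cyclicShift, hij, hj, hi, h₂ j]

theorem Complex.exists_add_eq_and_mul_eq_one (J : ℂ) : ∃ r s : ℂ, r + s = J ∧ r * s = 1 := by
  obtain ⟨d, hd⟩ := IsAlgClosed.exists_eq_mul_self (J ^ 2 - 4)
  exact ⟨(J + d) / 2, (J - d) / 2, by ring, by linear_combination hd / 4⟩

theorem det_circulant (N : ℕ) [NeZero N] (hN : 3 ≤ N) (J : ℝ) :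
    (circMat N J).det = 2 * chebT N (J / 2) - 2 := by
  obtain ⟨r, s, hsum, hrs⟩ := Complex.exists_add_eq_and_mul_eq_one J
  set S := cyclicShift ℂ N
  have hfactor : (circMat N J).map (algebraMap ℝ ℂ) = (r • 1 - S) * (1 - s • Sᵀ) := by
    rw [smul_one_sub_mul_one_sub_smul hrs cyclicShift_mul_transpose, hsum, circMat_eq N hN]
    simp [Matrix.map_sub, transpose_map, cyclicShift_map, Matrix.smul_one_eq_diagonal, S]
  have hdet : (1 - s • Sᵀ).det = 1 - s ^ N := by
    have : 1 - s • Sᵀ = ((1 : ℂ) • 1 - s • S)ᵀ := by simp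
    rw [this, det_transpose, det_smul_one_sub_smul_cyclicShift, one_pow]
  have hpow : r ^ N * s ^ N = 1 := by rw [← mul_pow, hrs, one_pow]
  apply Complex.ofReal_injective
  calc ((circMat N J).det : ℂ) = ((circMat N J).map (algebraMap ℝ ℂ)).det :=
        RingHom.map_det (algebraMap ℝ ℂ) _
    _ = (r ^ N - 1) * (1 - s ^ N) := by
      rw [hfactor, det_mul, hdet, ← one_smul ℂ S, det_smul_one_sub_smul_cyclicShift, one_pow]
    _ = r ^ N + s ^ N - 2 := by linear_combination -hpow
    _ = _ := by
      rw [← algebraMap_two_mul_chebT hrs (by rw [mul_div_cancel₀ J two_ne_zero]; exact hsum)]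
      simp
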